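/- arXiv:1204.1575 — 5 statements merged into one kernel-verified Lean document; each statement's English description precedes it below -/
import Mathlib

section
/- Let p ≡ 1 (mod 5) be prime and let ψ be a multiplicative character of F_p of order 5. If a, b, c ∈ ℤ are such that a + c ≢ 0 (mod 5) and b + c ≢ 0 (mod 5), then Σ_{χ} χ(−1)·J(χ^{−1}ψ^a, χ^{−1}ψ^b, χψ^c) = −(p−1), where the sum runs over all multiplicative characters χ of F_p, and the equality holds in ℂ. -/
open Finset

/-- The generalized Jacobi sum of order 3:
`J(χ₁, χ₂, χ₃) = Σ_{t₁+t₂+t₃=1} χ₁(t₁) χ₂(t₂) χ₃(t₃)`. -/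
noncomputable def jacobiSum₃ {p : ℕ} [NeZero p] (χ₁ χ₂ χ₃ : MulChar (ZMod p) ℂ) : ℂ :=
  ∑ t₁ : ZMod p, ∑ t₂ : ZMod p, χ₁ t₁ * χ₂ t₂ * χ₃ (1 - t₁ - t₂)

/-!
Exchanging the sums, `χ(-1) χ⁻¹(s) χ⁻¹(t) χ(1-s-t) = χ(-(1-s-t)/(st))`, so orthogonality of
characters leaves `p - 1` times the terms with `-(1-s-t) = st`, i.e. `(s-1)(t-1) = 0`. On the two
lines `s = 1` and `t = 1` the summand is `ψ^c(-1) ψ^{b+c}(t)`, resp. `ψ^c(-1) ψ^{a+c}(s)`; both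
line sums vanish because these characters are nontrivial, the point `(1,1)` is counted twice,
and `ψ^c(-1) = 1` since `ψ^c` has odd order.
-/

theorem sum_sum_ite_or_eq {α β M : Type*} [Fintype α] [Fintype β] [DecidableEq α]
    [DecidableEq β] [AddCommGroup M] (a : α) (b : β) (f : α → β → M) :
    ∑ x, ∑ y, (if x = a ∨ y = b then f x y else 0) = ∑ y, f a y + ∑ x, f x b - f a b := by
  have hsplit : ∀ x y, (if x = a ∨ y = b then f x y else 0) =
      (if x = a then f x y else 0) + (if y = b then f x y else 0) -
        if x = a then (if y = b then f x y else 0) else 0 := by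
    intro x y
    by_cases hx : x = a <;> by_cases hy : y = b <;> simp [hx, hy]
  simp only [hsplit, sum_sub_distrib, sum_add_distrib, sum_ite_eq', mem_univ, if_true]
  rw [sum_comm (f := fun x y => if x = a then f x y else 0)]
  simp only [sum_ite_irrel, sum_const_zero, sum_ite_eq', mem_univ, if_true]

theorem MulChar.apply_neg_one_eq_one_of_odd_orderOf {R R' : Type*} [CommRing R] [CommRing R']
    (χ : MulChar R R') (h : Odd (orderOf χ)) : χ (-1) = 1 := by
  calc χ (-1) = χ ((-1) ^ orderOf χ) := by rw [h.neg_one_pow]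
    _ = (χ ^ orderOf χ) (-1) := by rw [map_pow, MulChar.pow_apply' _ h.pos.ne']
    _ = 1 := by rw [pow_orderOf_eq_one, MulChar.one_apply isUnit_one.neg]

theorem MulChar.sum_apply_eq_ite {n : ℕ} [NeZero n] [inst : Fintype (MulChar (ZMod n) ℂ)]
    (x : ZMod n) :
    ∑ χ : MulChar (ZMod n) ℂ, χ x = if x = 1 then (n.totient : ℂ) else 0 := by
  rw [Subsingleton.elim inst DirichletCharacter.fintype]
  exact DirichletCharacter.sum_characters_eq ℂ x

theorem neg_inv_mul_inv_mul_eq_one_iff {F : Type*} [Field F] {s t : F} (hs : s ≠ 0)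
    (ht : t ≠ 0) : -(s⁻¹ * t⁻¹ * (1 - s - t)) = 1 ↔ s = 1 ∨ t = 1 := by
  have : -(s⁻¹ * t⁻¹ * (1 - s - t)) = 1 ↔ (s - 1) * (t - 1) = 0 := by
    constructor <;> intro h
    · field_simp at h; linear_combination -h
    · field_simp; linear_combination -h
  rw [this, mul_eq_zero, sub_eq_zero, sub_eq_zero]

section

variable {p : ℕ} [Fact p.Prime] [Fintype (MulChar (ZMod p) ℂ)]

theorem sum_mulChar_neg_one_mul_apply_mul (α β γ : MulChar (ZMod p) ℂ) (s t : ZMod p) :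
    ∑ χ : MulChar (ZMod p) ℂ,
        χ (-1) * ((χ⁻¹ * α) s * (χ⁻¹ * β) t * (χ * γ) (1 - s - t)) =
      if s = 1 ∨ t = 1 then ((p : ℂ) - 1) * (α s * β t * γ (1 - s - t)) else 0 := by
  have hterm : ∀ χ : MulChar (ZMod p) ℂ,
      χ (-1) * ((χ⁻¹ * α) s * (χ⁻¹ * β) t * (χ * γ) (1 - s - t)) =
        α s * β t * γ (1 - s - t) * χ (-(s⁻¹ * t⁻¹ * (1 - s - t))) := by
    intro χ
    rw [show -(s⁻¹ * t⁻¹ * (1 - s - t)) = -1 * s⁻¹ * (t⁻¹ * (1 - s - t)) by ring]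
    simp only [map_mul, MulChar.mul_apply, MulChar.inv_apply']
    ring
  rw [sum_congr rfl fun χ _ => hterm χ, ← mul_sum, MulChar.sum_apply_eq_ite,
    Nat.totient_prime Fact.out, Nat.cast_sub (Fact.out : p.Prime).one_le, Nat.cast_one]
  rcases eq_or_ne s 0 with rfl | hs
  · simp [MulChar.map_nonunit α not_isUnit_zero]
  rcases eq_or_ne t 0 with rfl | ht
  · simp [MulChar.map_nonunit β not_isUnit_zero]
  simp only [neg_inv_mul_inv_mul_eq_one_iff hs ht]
  split_ifs <;> ring

theorem sum_mulChar_neg_one_mul_jacobiSum₃ (α β γ : MulChar (ZMod p) ℂ) :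
    ∑ χ : MulChar (ZMod p) ℂ, χ (-1) * jacobiSum₃ (χ⁻¹ * α) (χ⁻¹ * β) (χ * γ) =
      ((p : ℂ) - 1) * γ (-1) *
        (∑ t : ZMod p, (β * γ) t + ∑ s : ZMod p, (α * γ) s - 1) := by
  have hγ : ∀ u : ZMod p, γ (-u) = γ (-1) * γ u := fun u => by
    rw [← map_mul, neg_one_mul]
  calc ∑ χ : MulChar (ZMod p) ℂ, χ (-1) * jacobiSum₃ (χ⁻¹ * α) (χ⁻¹ * β) (χ * γ)
      = ∑ s : ZMod p, ∑ t : ZMod p, ∑ χ : MulChar (ZMod p) ℂ,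
          χ (-1) * ((χ⁻¹ * α) s * (χ⁻¹ * β) t * (χ * γ) (1 - s - t)) := by
        simp only [jacobiSum₃, mul_sum]
        rw [sum_comm]
        exact sum_congr rfl fun s _ => sum_comm
    _ = ∑ s : ZMod p, ∑ t : ZMod p,
          if s = 1 ∨ t = 1 then ((p : ℂ) - 1) * (α s * β t * γ (1 - s - t)) else 0 := by
        simp only [sum_mulChar_neg_one_mul_apply_mul]
    _ = ((p : ℂ) - 1) * γ (-1) *
          (∑ t : ZMod p, (β * γ) t + ∑ s : ZMod p, (α * γ) s - 1) := by
        have hrow : ∀ t, ((p : ℂ) - 1) * (α 1 * β t * γ (1 - 1 - t)) =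
            ((p : ℂ) - 1) * γ (-1) * (β * γ) t := fun t => by
          rw [sub_self, zero_sub, hγ, map_one, MulChar.mul_apply]; ring
        have hcol : ∀ s, ((p : ℂ) - 1) * (α s * β 1 * γ (1 - s - 1)) =
            ((p : ℂ) - 1) * γ (-1) * (α * γ) s := fun s => by
          rw [sub_sub_cancel_left, hγ, map_one, MulChar.mul_apply]; ring
        rw [sum_sum_ite_or_eq, hrow 1, sum_congr rfl fun t _ => hrow t,
          sum_congr rfl fun s _ => hcol s, ← mul_sum, ← mul_sum, map_one]
        ring

end

theorem sum_jacobiSum₃_eq_general (p : ℕ) [Fact p.Prime]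
    [Fintype (MulChar (ZMod p) ℂ)]
    (ψ : MulChar (ZMod p) ℂ) (hψ : orderOf ψ = 5)
    (a b c : ℤ) (hac : ¬ (5 : ℤ) ∣ (a + c)) (hbc : ¬ (5 : ℤ) ∣ (b + c)) :
    ∑ χ : MulChar (ZMod p) ℂ,
        χ (-1) * jacobiSum₃ (χ⁻¹ * ψ ^ a) (χ⁻¹ * ψ ^ b) (χ * ψ ^ c) =
      -((p : ℂ) - 1) := by
  have hψc : (ψ ^ c) (-1) = 1 := by
    refine (ψ ^ c).apply_neg_one_eq_one_of_odd_orderOf (Odd.of_dvd_nat (n := 5) (by decide) ?_)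
    refine orderOf_dvd_of_pow_eq_one ?_
    rw [← zpow_natCast, ← zpow_mul, mul_comm, zpow_mul, zpow_natCast, ← hψ, pow_orderOf_eq_one,
      one_zpow]
  have hsum : ∀ d : ℤ, ¬ (5 : ℤ) ∣ d → ∑ t : ZMod p, (ψ ^ d) t = 0 := by
    intro d hd
    refine MulChar.sum_eq_zero_of_ne_one fun h => hd ?_
    exact_mod_cast hψ ▸ orderOf_dvd_iff_zpow_eq_one.mpr h
  rw [sum_mulChar_neg_one_mul_jacobiSum₃, hψc, ← zpow_add, ← zpow_add, hsum _ hbc, hsum _ hac]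
  ring

/-- For a prime `p ≡ 1 (mod 5)`, a character `ψ` of order 5 and integers `a, b, c` with
`a + c ≢ 0` and `b + c ≢ 0 (mod 5)`, one has
`Σ_χ χ(-1) J(χ⁻¹ψ^a, χ⁻¹ψ^b, χψ^c) = -(p-1)`. -/
theorem sum_jacobiSum₃_eq (p : ℕ) [Fact p.Prime] (hp : p % 5 = 1)
    [Fintype (MulChar (ZMod p) ℂ)]
    (ψ : MulChar (ZMod p) ℂ) (hψ : orderOf ψ = 5)
    (a b c : ℤ) (hac : ¬ (5 : ℤ) ∣ (a + c)) (hbc : ¬ (5 : ℤ) ∣ (b + c)) :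
    ∑ χ : MulChar (ZMod p) ℂ,
        χ (-1) * jacobiSum₃ (χ⁻¹ * ψ ^ a) (χ⁻¹ * ψ ^ b) (χ * ψ ^ c) =
      -((p : ℂ) - 1) :=
  sum_jacobiSum₃_eq_general p ψ hψ a b c hac hbc
end

section
/- Let p ≡ 1 (mod 5) be prime and let ψ be a multiplicative character of F_p of order 5. If a, b, c ∈ ℤ are such that a + c ≢ 0 (mod 5) and b + c ≢ 0 (mod 5), then Σ_{χ} g(χ^{−1}ψ^a)·g(χ^{−1}ψ^b)·g(χψ^c)·g(χψ^{−(a+b+c)}) = −p(p−1), where the sum runs over all multiplicative characters χ of F_p, and the equality holds in ℂ. -/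
open Finset

lemma zpow_apply_neg_one_aux {p : ℕ} [Fact p.Prime]
    (ψ : MulChar (ZMod p) ℂ) (hψ : orderOf ψ = 5) (k : ℤ) :
    (ψ ^ k) (-1) = 1 := by
  have hu : IsUnit (-1 : ZMod p) := isUnit_one.neg
  have hx2 : ψ (-1) * ψ (-1) = 1 := by
    rw [← map_mul]; norm_num
  have hx5 : ψ (-1) ^ 5 = 1 := by
    have h5 : ψ ^ 5 = 1 := hψ ▸ pow_orderOf_eq_one ψ
    have := MulChar.pow_apply' ψ (n := 5) (by norm_num) (-1)
    rw [h5] at this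
    rw [← this, MulChar.one_apply hu]
  have hx : ψ (-1) = 1 := by
    have h2 : ψ (-1) ^ 2 = 1 := by rw [sq]; exact hx2
    calc ψ (-1) = (ψ (-1) ^ 2) ^ 2 * ψ (-1) := by rw [h2]; ring
    _ = ψ (-1) ^ 5 := by ring
    _ = 1 := hx5
  have key : ∀ χ : MulChar (ZMod p) ℂ, χ (-1) = ((MulChar.equivToUnitHom χ) hu.unit : ℂ) := by
    intro χ
    rw [MulChar.coe_equivToUnitHom, hu.unit_spec]
  rw [key]
  have : MulChar.equivToUnitHom (ψ ^ k) = (MulChar.mulEquivToUnitHom ψ) ^ k := by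
    rw [← map_zpow]; rfl
  rw [this]
  have hψ1 : (MulChar.mulEquivToUnitHom ψ) hu.unit = 1 := by
    ext
    show ((MulChar.equivToUnitHom ψ) hu.unit : ℂ) = ((1 : (ZMod p)ˣ →* ℂˣ) hu.unit : ℂ)
    rw [← key ψ, hx]
    simp
  have : ((MulChar.mulEquivToUnitHom ψ) ^ k) hu.unit = ((MulChar.mulEquivToUnitHom ψ) hu.unit) ^ k := rfl
  rw [this, hψ1, one_zpow, Units.val_one]

/-- For a prime `p ≡ 1 (mod 5)`, a character `ψ` of order 5, a nontrivial additive
character `θ`, and integers `a, b, c` with `a + c ≢ 0` and `b + c ≢ 0 (mod 5)`, one has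
`Σ_χ g(χ⁻¹ψ^a) g(χ⁻¹ψ^b) g(χψ^c) g(χψ^{-(a+b+c)}) = -p(p-1)`. -/
theorem sum_gaussSum_four_eq (p : ℕ) [Fact p.Prime] (hp : p % 5 = 1)
    [Fintype (MulChar (ZMod p) ℂ)]
    (θ : AddChar (ZMod p) ℂ) (hθ : θ ≠ 1)
    (ψ : MulChar (ZMod p) ℂ) (hψ : orderOf ψ = 5)
    (a b c : ℤ) (hac : ¬ (5 : ℤ) ∣ (a + c)) (hbc : ¬ (5 : ℤ) ∣ (b + c)) :
    ∑ χ : MulChar (ZMod p) ℂ,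
        gaussSum (χ⁻¹ * ψ ^ a) θ * gaussSum (χ⁻¹ * ψ ^ b) θ * gaussSum (χ * ψ ^ c) θ *
          gaussSum (χ * ψ ^ (-(a + b + c))) θ =
      -(p : ℂ) * ((p : ℂ) - 1) := by
  have hpp : p.Prime := Fact.out
  have hθp : θ.IsPrimitive := AddChar.IsPrimitive.of_ne_one hθ
  have hnt : ∀ k : ℤ, ¬ (5 : ℤ) ∣ k → ψ ^ k ≠ 1 := by
    intro k hk h
    have := orderOf_dvd_iff_zpow_eq_one.mpr h
    rw [hψ] at this
    exact hk (by exact_mod_cast this)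
  have hU : ψ ^ (a + c) ≠ 1 := hnt _ hac
  have hW : ψ ^ (-(b + c)) ≠ 1 := hnt _ (by rw [dvd_neg]; exact hbc)
  -- Gauss sum pairing : g(ψ^(a+c)) g(ψ^(-(a+c))) = p
  have hg : gaussSum (ψ ^ (a + c)) θ * gaussSum (ψ ^ (-(a + c))) θ = (p : ℂ) := by
    have h3 : (ψ ^ (a + c))⁻¹ = ψ ^ (-(a + c)) := (zpow_neg ψ (a + c)).symm
    have h1 := gaussSum_mul_gaussSum_eq_card hU hθp
    have h4 := mul_gaussSum_inv_eq_gaussSum (ψ ^ (a + c))⁻¹ θ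
    rw [h3, zpow_apply_neg_one_aux ψ hψ, one_mul] at h4
    rw [h3, h4] at h1
    rw [h1, ZMod.card]
  -- per-χ reduction to Jacobi sums
  have key : ∀ χ : MulChar (ZMod p) ℂ,
      gaussSum (χ⁻¹ * ψ ^ a) θ * gaussSum (χ⁻¹ * ψ ^ b) θ * gaussSum (χ * ψ ^ c) θ *
        gaussSum (χ * ψ ^ (-(a + b + c))) θ =
      (p : ℂ) * (jacobiSum (χ⁻¹ * ψ ^ a) (χ * ψ ^ c) *
        jacobiSum (χ⁻¹ * ψ ^ b) (χ * ψ ^ (-(a + b + c)))) := by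
    intro χ
    have e1 : (χ⁻¹ * ψ ^ a) * (χ * ψ ^ c) = ψ ^ (a + c) := by
      rw [mul_mul_mul_comm, inv_mul_cancel, one_mul, ← zpow_add]
    have e2 : (χ⁻¹ * ψ ^ b) * (χ * ψ ^ (-(a + b + c))) = ψ ^ (-(a + c)) := by
      rw [mul_mul_mul_comm, inv_mul_cancel, one_mul, ← zpow_add]
      congr 1
      ring
    have j1 := jacobiSum_mul_nontrivial (e1 ▸ hU) θ
    have j2 := jacobiSum_mul_nontrivial (χ := χ⁻¹ * ψ ^ b) (φ := χ * ψ ^ (-(a + b + c)))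
      (by rw [e2]; exact hnt _ (by rw [dvd_neg]; exact hac)) θ
    rw [e1] at j1
    rw [e2] at j2
    calc gaussSum (χ⁻¹ * ψ ^ a) θ * gaussSum (χ⁻¹ * ψ ^ b) θ * gaussSum (χ * ψ ^ c) θ *
        gaussSum (χ * ψ ^ (-(a + b + c))) θ
        = (gaussSum (χ⁻¹ * ψ ^ a) θ * gaussSum (χ * ψ ^ c) θ) *
          (gaussSum (χ⁻¹ * ψ ^ b) θ * gaussSum (χ * ψ ^ (-(a + b + c))) θ) := by ring
      _ = (gaussSum (ψ ^ (a + c)) θ * jacobiSum (χ⁻¹ * ψ ^ a) (χ * ψ ^ c)) *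
          (gaussSum (ψ ^ (-(a + c))) θ * jacobiSum (χ⁻¹ * ψ ^ b) (χ * ψ ^ (-(a + b + c)))) := by
            rw [j1, j2]
      _ = (gaussSum (ψ ^ (a + c)) θ * gaussSum (ψ ^ (-(a + c))) θ) *
          (jacobiSum (χ⁻¹ * ψ ^ a) (χ * ψ ^ c) *
            jacobiSum (χ⁻¹ * ψ ^ b) (χ * ψ ^ (-(a + b + c)))) := by ring
      _ = _ := by rw [hg]
  rw [Finset.sum_congr rfl fun χ _ => key χ, ← Finset.mul_sum]
  -- orthogonality
  have orth : ∀ u : ZMod p, ∑ χ : MulChar (ZMod p) ℂ, χ u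
      = if u = 1 then ((p : ℂ) - 1) else 0 := by
    intro u
    have h := DirichletCharacter.sum_characters_eq (R := ℂ) (n := p) u
    have hcast : (p.totient : ℂ) = (p : ℂ) - 1 := by
      rw [Nat.totient_prime hpp, Nat.cast_sub hpp.one_le, Nat.cast_one]
    rw [hcast] at h
    rw [← h]
    congr 1
    congr 1
    exact Subsingleton.elim _ _
  -- the sum of products of Jacobi sums
  have S : ∑ χ : MulChar (ZMod p) ℂ, jacobiSum (χ⁻¹ * ψ ^ a) (χ * ψ ^ c) *
      jacobiSum (χ⁻¹ * ψ ^ b) (χ * ψ ^ (-(a + b + c))) = -((p : ℂ) - 1) := by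
    have h0 : ∀ k : ℤ, (ψ ^ k) (0 : ZMod p) = 0 := fun k =>
      MulChar.map_nonunit _ (by simp)
    have hterm : ∀ (χ : MulChar (ZMod p) ℂ) (x y : ZMod p),
        (χ⁻¹ * ψ ^ a) x * (χ * ψ ^ c) (1 - x) *
          ((χ⁻¹ * ψ ^ b) y * (χ * ψ ^ (-(a + b + c))) (1 - y))
        = (ψ ^ a) x * (ψ ^ c) (1 - x) * ((ψ ^ b) y * (ψ ^ (-(a + b + c))) (1 - y))
          * χ (x⁻¹ * (1 - x) * (y⁻¹ * (1 - y))) := by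
      intro χ x y
      simp only [MulChar.coeToFun_mul, Pi.mul_apply, MulChar.inv_apply']
      rw [map_mul, map_mul, map_mul]
      ring
    have hxy : ∀ x y : ZMod p,
        (ψ ^ a) x * (ψ ^ c) (1 - x) * ((ψ ^ b) y * (ψ ^ (-(a + b + c))) (1 - y))
          * (if x⁻¹ * (1 - x) * (y⁻¹ * (1 - y)) = 1 then ((p : ℂ) - 1) else 0)
        = if y = 1 - x then (ψ ^ (-(b + c))) x * (ψ ^ (b + c)) (1 - x) * ((p : ℂ) - 1)
          else 0 := by
      intro x y
      rcases eq_or_ne y (1 - x) with rfl | hy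
      · rw [if_pos rfl]
        by_cases hx0 : x = 0
        · subst hx0; simp [h0]
        by_cases hx1 : x = 1
        · subst hx1; simp [h0]
        · have h1x : (1 : ZMod p) - x ≠ 0 := sub_ne_zero.mpr (Ne.symm hx1)
          have hcond : x⁻¹ * (1 - x) * ((1 - x)⁻¹ * (1 - (1 - x))) = 1 := by
            rw [sub_sub_cancel]
            field_simp
          rw [if_pos hcond, sub_sub_cancel]
          have e3 : ψ ^ a * ψ ^ (-(a + b + c)) = ψ ^ (-(b + c)) := by
            rw [← zpow_add]; congr 1; ring
          have e4 : ψ ^ b * ψ ^ c = ψ ^ (b + c) := by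
            rw [← zpow_add]
          rw [← e3, ← e4]
          simp only [MulChar.coeToFun_mul, Pi.mul_apply]
          ring
      · rw [if_neg hy]
        by_cases hc : x⁻¹ * (1 - x) * (y⁻¹ * (1 - y)) = 1
        · exfalso
          have hx0 : x ≠ 0 := by rintro rfl; simp at hc
          have hy0 : y ≠ 0 := by rintro rfl; simp at hc
          field_simp at hc
          apply hy
          linear_combination -hc
        · rw [if_neg hc, mul_zero]
    calc ∑ χ : MulChar (ZMod p) ℂ, jacobiSum (χ⁻¹ * ψ ^ a) (χ * ψ ^ c) *
          jacobiSum (χ⁻¹ * ψ ^ b) (χ * ψ ^ (-(a + b + c)))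
        = ∑ χ : MulChar (ZMod p) ℂ, ∑ x : ZMod p, ∑ y : ZMod p,
            (χ⁻¹ * ψ ^ a) x * (χ * ψ ^ c) (1 - x) *
              ((χ⁻¹ * ψ ^ b) y * (χ * ψ ^ (-(a + b + c))) (1 - y)) := by
          simp only [jacobiSum, Finset.sum_mul_sum]
      _ = ∑ x : ZMod p, ∑ y : ZMod p, ∑ χ : MulChar (ZMod p) ℂ,
            (χ⁻¹ * ψ ^ a) x * (χ * ψ ^ c) (1 - x) *
              ((χ⁻¹ * ψ ^ b) y * (χ * ψ ^ (-(a + b + c))) (1 - y)) := by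
          rw [Finset.sum_comm]
          exact Finset.sum_congr rfl fun x _ => Finset.sum_comm
      _ = ∑ x : ZMod p, ∑ y : ZMod p,
            (ψ ^ a) x * (ψ ^ c) (1 - x) * ((ψ ^ b) y * (ψ ^ (-(a + b + c))) (1 - y))
              * (if x⁻¹ * (1 - x) * (y⁻¹ * (1 - y)) = 1 then ((p : ℂ) - 1) else 0) := by
          refine Finset.sum_congr rfl fun x _ => Finset.sum_congr rfl fun y _ => ?_
          rw [Finset.sum_congr rfl fun χ _ => hterm χ x y, ← Finset.mul_sum, orth]
      _ = ∑ x : ZMod p,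
            (ψ ^ (-(b + c))) x * (ψ ^ (b + c)) (1 - x) * ((p : ℂ) - 1) := by
          refine Finset.sum_congr rfl fun x _ => ?_
          rw [Finset.sum_congr rfl fun y _ => hxy x y]
          simp
      _ = jacobiSum (ψ ^ (-(b + c))) (ψ ^ (b + c)) * ((p : ℂ) - 1) := by
          rw [jacobiSum, Finset.sum_mul]
      _ = -((p : ℂ) - 1) := by
          rw [show (ψ ^ (b + c) : MulChar (ZMod p) ℂ) = (ψ ^ (-(b + c)))⁻¹ by
              rw [zpow_neg, inv_inv],
            jacobiSum_nontrivial_inv hW, zpow_apply_neg_one_aux ψ hψ]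
          ring
  rw [S]
  ring
end

section
/- Let p ≡ 1 (mod 5) be prime, set t := (p−1)/5, and let T be a generator of the group of multiplicative characters of F_p. Then, as complex numbers, Σ_{w} ∏_{i=1}^{5} g(T^{w_i t}) = 50·p·Σ_{i=1}^{4} g(T^{it})^2·g(T^{3it}) + Σ_{i=1}^{4} g(T^{it})^5, where the outer sum on the left runs over all tuples w = (w_1, w_2, w_3, w_4, w_5) with each w_i ∈ {1, 2, 3, 4} and w_1 + w_2 + w_3 + w_4 + w_5 ≡ 0 (mod 5). -/
/-!
Write `g_i = g(T^{it})`. The character `T^{it}` has order dividing 5, which is odd, so it is even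
and `g_i g_{5-i} = g(χ) g(χ⁻¹) = χ(-1) p = p` for `0 < i < 5`. Expanding the sum over tuples as a
polynomial in `g_1, …, g_4`, every monomial other than the fifth powers contains `g_1 g_4` or
`g_2 g_3`, and the multinomial coefficients 20 and 30 of the surviving monomials add up to 50.
-/

open Finset

theorem MulChar.orderOf_eq_card_units_of_forall_eq_pow {M R : Type*} [CommMonoid M] [Finite M]
    [CommRing R] [HasEnoughRootsOfUnity R (Monoid.exponent Mˣ)] {T : MulChar M R}
    (hT : ∀ χ : MulChar M R, ∃ k : ℕ, χ = T ^ k) :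
    orderOf T = Nat.card Mˣ := by
  rw [← card_eq_card_units_of_hasEnoughRootsOfUnity M R]
  exact orderOf_eq_card_of_forall_mem_powers fun χ => (hT χ).imp fun _ hk => hk.symm

theorem MulChar.apply_neg_one_eq_one_of_pow_eq_one {M R : Type*} [CommRing M] [CommRing R]
    {χ : MulChar M R} {n : ℕ} (hn : Odd n) (hχ : χ ^ n = 1) : χ (-1) = 1 := by
  obtain ⟨m, rfl⟩ := hn
  have hsq : χ (-1) ^ 2 = 1 := by rw [← map_pow, neg_one_sq, map_one]
  calc χ (-1) = (χ (-1) ^ 2) ^ m * χ (-1) := by rw [hsq, one_pow, one_mul]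
    _ = (χ ^ (2 * m + 1)) (-1) := by
      rw [← pow_mul, ← pow_succ, ← Units.coe_neg_one, MulChar.pow_apply_coe]
    _ = 1 := by rw [hχ, ← Units.coe_neg_one, MulChar.one_apply_coe]

theorem gaussSum_mul_gaussSum_inv_eq_card {F R : Type*} [Field F] [Fintype F] [CommRing R]
    [IsDomain R] {χ : MulChar F R} (hχ : χ ≠ 1) (hχ_even : χ (-1) = 1) {ψ : AddChar F R}
    (hψ : ψ.IsPrimitive) :
    gaussSum χ ψ * gaussSum χ⁻¹ ψ = Fintype.card F := by
  have hinv_even : χ⁻¹ (-1) = 1 := by rw [MulChar.inv_apply', inv_neg_one, hχ_even]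
  rw [← mul_gaussSum_inv_eq_gaussSum χ⁻¹ ψ, hinv_even, one_mul,
    gaussSum_mul_gaussSum_eq_card hχ hψ]

theorem Fintype.sum_fin_succ_pi {β M : Type*} [Fintype β] [AddCommMonoid M] {n : ℕ}
    (F : (Fin (n + 1) → β) → M) :
    ∑ w, F w = ∑ x, ∑ w : Fin n → β, F (Matrix.vecCons x w) := by
  rw [← (Fin.consEquiv fun _ => β).sum_comp F, Fintype.sum_prod_type]
  rfl

theorem sum_tuples_sum_mod_five_eq_zero_prod {R : Type*} [CommRing R] (a : Fin 4 → R) :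
    ∑ w ∈ univ.filter (fun w : Fin 5 → Fin 4 => (∑ i, ((w i : ℕ) + 1)) % 5 = 0),
        ∏ i, a (w i) =
      a 0 ^ 5 + a 1 ^ 5 + a 2 ^ 5 + a 3 ^ 5
        + 20 * (a 0 ^ 3 * a 2 * a 3 + a 0 * a 1 ^ 3 * a 2 + a 0 * a 1 * a 3 ^ 3
          + a 1 * a 2 ^ 3 * a 3)
        + 30 * (a 0 ^ 2 * a 1 ^ 2 * a 3 + a 0 ^ 2 * a 1 * a 2 ^ 2 + a 0 * a 2 ^ 2 * a 3 ^ 2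
          + a 1 ^ 2 * a 2 * a 3 ^ 2) := by
  rw [sum_filter]
  simp only [Fintype.sum_fin_succ_pi, Fintype.sum_unique, Fin.sum_univ_five, Fin.prod_univ_five,
    Fin.sum_univ_four, Matrix.cons_val_zero, Matrix.cons_val_one, Matrix.cons_val_two,
    Matrix.cons_val_three, Matrix.cons_val_four, Matrix.head_cons, Matrix.tail_cons]
  norm_num
  ring

theorem sum_tuples_sum_mod_five_eq_zero_prod_of_periodic {R : Type*} [CommRing R] (f : ℕ → R)
    (hf : ∀ n, f (n + 5) = f n) {P : R} (h₁₄ : f 1 * f 4 = P) (h₂₃ : f 2 * f 3 = P) :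
    ∑ w ∈ univ.filter (fun w : Fin 5 → Fin 4 => (∑ i, ((w i : ℕ) + 1)) % 5 = 0),
        ∏ i, f (w i + 1) =
      50 * P * ∑ i ∈ Icc 1 4, f i ^ 2 * f (3 * i) + ∑ i ∈ Icc 1 4, f i ^ 5 := by
  rw [sum_tuples_sum_mod_five_eq_zero_prod fun j => f (j + 1)]
  have h6 : f 6 = f 1 := hf 1
  have h9 : f 9 = f 4 := hf 4
  have h12 : f 12 = f 2 := (hf 7).trans (hf 2)
  rw [show Icc 1 4 = ({1, 2, 3, 4} : Finset ℕ) from rfl]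
  simp only [Fin.isValue, Fin.coe_ofNat_eq_mod, Nat.reduceMod, Nat.reduceAdd, Nat.reduceMul,
    mem_insert, mem_singleton, OfNat.one_ne_ofNat, Nat.reduceEqDiff, or_self, not_false_eq_true,
    sum_insert, sum_singleton, h6, h9, h12]
  linear_combination (20 * f 1 ^ 2 * f 3 + 20 * f 2 * f 4 ^ 2 + 30 * f 3 ^ 2 * f 4
    + 30 * f 1 * f 2 ^ 2) * h₁₄ + (20 * f 1 * f 2 ^ 2 + 20 * f 3 ^ 2 * f 4
    + 30 * f 2 * f 4 ^ 2 + 30 * f 1 ^ 2 * f 3) * h₂₃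

/-- For `p ≡ 1 (mod 5)`, `t = (p-1)/5` and `T` a generator of the character group,
the sum of `∏_{i=1}^5 g(T^{wᵢt})` over all tuples `w` with `wᵢ ∈ {1,2,3,4}` and
`w₁+⋯+w₅ ≡ 0 (mod 5)` equals `50 p Σ_{i=1}^4 g(T^{it})² g(T^{3it}) + Σ_{i=1}^4 g(T^{it})⁵`.
(Each `wᵢ ∈ {1,2,3,4}` is encoded as `(w i : ℕ) + 1` with `w i : Fin 4`.) -/
theorem sum_over_W_eq (p : ℕ) [Fact p.Prime] (hp : p % 5 = 1)
    (θ : AddChar (ZMod p) ℂ) (hθ : θ ≠ 1)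
    (T : MulChar (ZMod p) ℂ) (hT : ∀ χ : MulChar (ZMod p) ℂ, ∃ k : ℕ, χ = T ^ k)
    (t : ℕ) (ht : t = (p - 1) / 5) :
    ∑ w ∈ Finset.univ.filter
        (fun w : Fin 5 → Fin 4 => (∑ i, ((w i : ℕ) + 1)) % 5 = 0),
        ∏ i, gaussSum (T ^ (((w i : ℕ) + 1) * t)) θ =
      50 * (p : ℂ) *
          ∑ i ∈ Finset.Icc 1 4, gaussSum (T ^ (i * t)) θ ^ 2 * gaussSum (T ^ (3 * i * t)) θ +
        ∑ i ∈ Finset.Icc 1 4, gaussSum (T ^ (i * t)) θ ^ 5 := by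
  have ht_pos : 0 < t := by have := (Fact.out : p.Prime).two_le; omega
  have : NeZero ((Monoid.exponent (ZMod p)ˣ : ℕ) : ℂ) :=
    ⟨Nat.cast_ne_zero.mpr Monoid.exponent_ne_zero_of_finite⟩
  have horder : orderOf T = 5 * t := by
    rw [MulChar.orderOf_eq_card_units_of_forall_eq_pow hT, Nat.card_eq_fintype_card,
      ZMod.card_units]
    omega
  have hT5 : T ^ (5 * t) = 1 := horder ▸ pow_orderOf_eq_one T
  have hperiodic (n : ℕ) : gaussSum (T ^ ((n + 5) * t)) θ = gaussSum (T ^ (n * t)) θ := by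
    rw [add_mul, pow_add, hT5, mul_one]
  have hpair (i : ℕ) (hi₀ : 0 < i) (hi₅ : i < 5) :
      gaussSum (T ^ (i * t)) θ * gaussSum (T ^ ((5 - i) * t)) θ = p := by
    have hχ : T ^ (i * t) ≠ 1 := by
      rw [Ne, ← orderOf_dvd_iff_pow_eq_one, horder]
      exact fun h =>
        (Nat.mul_lt_mul_of_pos_right hi₅ ht_pos).not_ge (Nat.le_of_dvd (by positivity) h)
    have hχ5 : (T ^ (i * t)) ^ 5 = 1 := by
      rw [← pow_mul, show i * t * 5 = 5 * t * i by ring, pow_mul, hT5, one_pow]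
    have hinv : (T ^ (i * t))⁻¹ = T ^ ((5 - i) * t) := by
      refine inv_eq_of_mul_eq_one_right ?_
      rw [← pow_add, ← add_mul, Nat.add_sub_cancel' hi₅.le, hT5]
    rw [← hinv, gaussSum_mul_gaussSum_inv_eq_card hχ
      (MulChar.apply_neg_one_eq_one_of_pow_eq_one (by decide) hχ5)
      (AddChar.IsPrimitive.of_ne_one hθ), ZMod.card]
  exact sum_tuples_sum_mod_five_eq_zero_prod_of_periodic (fun n => gaussSum (T ^ (n * t)) θ)
    hperiodic (hpair 1 one_pos (by norm_num)) (hpair 2 two_pos (by norm_num))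
end

section
/- Let p ≡ 1 (mod 5) be prime, set t := (p−1)/5, and let T be a generator of the group of multiplicative characters of F_p. Then, as complex numbers, Σ_{j=0}^{p−2} [g(T^j)^5 / g(T^{5j})]·T^{5j}(5) = 1 − Σ_{i=1}^{4} g(T^{it})^5 + (1/p)·Σ_{j=1, t∤j}^{p−2} g(T^j)^5·g(T^{−5j})·T^{5j}(−5), where the last sum runs over those j with 1 ≤ j ≤ p−2 that are not divisible by t. -/
open Finset

/-- For `p ≡ 1 (mod 5)`, `t = (p-1)/5` and `T` a generator of the character group,
`Σ_{j=0}^{p-2} (g(T^j)⁵ / g(T^{5j})) T^{5j}(5)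
  = 1 - Σ_{i=1}^4 g(T^{it})⁵ + (1/p) Σ_{1 ≤ j ≤ p-2, t ∤ j} g(T^j)⁵ g(T^{-5j}) T^{5j}(-5)`. -/
theorem S_00000_eq (p : ℕ) [Fact p.Prime] (hp : p % 5 = 1)
    (θ : AddChar (ZMod p) ℂ) (hθ : θ ≠ 1)
    (T : MulChar (ZMod p) ℂ) (hT : ∀ χ : MulChar (ZMod p) ℂ, ∃ k : ℕ, χ = T ^ k)
    (t : ℕ) (ht : t = (p - 1) / 5) :
    ∑ j ∈ Finset.range (p - 1),
        gaussSum (T ^ j) θ ^ 5 / gaussSum (T ^ (5 * j)) θ * (T ^ (5 * j)) (5 : ZMod p) =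
      1 - ∑ i ∈ Finset.Icc 1 4, gaussSum (T ^ (i * t)) θ ^ 5 +
        (1 / (p : ℂ)) *
          ∑ j ∈ (Finset.Icc 1 (p - 2)).filter (fun j => ¬ t ∣ j),
            gaussSum (T ^ j) θ ^ 5 * gaussSum (T ^ (-(5 * (j : ℤ)))) θ *
              (T ^ (5 * j)) (-5 : ZMod p) := by
  classical
  have hP : p.Prime := Fact.out
  have hp2 : 2 ≤ p := hP.two_le
  have hp6 : 6 ≤ p := by omega
  have h5t : 5 * t = p - 1 := by omega
  have ht1 : 1 ≤ t := by omega
  have hθprim : θ.IsPrimitive := AddChar.IsPrimitive.of_ne_one hθ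
  have hpne : (p : ℂ) ≠ 0 := Nat.cast_ne_zero.mpr (by omega)
  -- the order of T is p - 1
  have hord : orderOf T = p - 1 := by
    have hdvd : orderOf T ∣ p - 1 := by
      have := MulChar.orderOf_dvd_card_sub_one (ZMod p) T
      rwa [ZMod.card] at this
    have hprim := Complex.isPrimitiveRoot_exp (p - 1) (by omega)
    have hd : (p - 1) ∣ Fintype.card (ZMod p) - 1 := by rw [ZMod.card]
    obtain ⟨χ, hχ⟩ := MulChar.exists_mulChar_orderOf (ZMod p) hd hprim
    obtain ⟨k, rfl⟩ := hT χ
    exact Nat.dvd_antisymm hdvd (hχ ▸ orderOf_pow_dvd k)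
  have hpow1 : ∀ m : ℕ, T ^ m = 1 ↔ (p - 1) ∣ m := by
    intro m
    rw [← hord, orderOf_dvd_iff_pow_eq_one]
  -- Gauss sum of the trivial character
  have hg1 : gaussSum (1 : MulChar (ZMod p) ℂ) θ = -1 := by
    have hsum : ∑ x : ZMod p, θ x = 0 := AddChar.sum_eq_zero_iff_ne_zero.mpr hθ
    have h1 : gaussSum (1 : MulChar (ZMod p) ℂ) θ
        = ∑ x : ZMod p, (θ x - if x = 0 then 1 else 0) := by
      unfold gaussSum
      refine Finset.sum_congr rfl fun x _ => ?_
      rcases eq_or_ne x 0 with rfl | hx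
      · simp [MulChar.map_zero]
      · rw [MulChar.one_apply (isUnit_iff_ne_zero.mpr hx), one_mul, if_neg hx, sub_zero]
    rw [h1, Finset.sum_sub_distrib, hsum]
    simp
  have h5u : IsUnit (5 : ZMod p) := by
    apply isUnit_iff_ne_zero.mpr
    have : ((5 : ℕ) : ZMod p) ≠ 0 := by
      rw [Ne, ZMod.natCast_eq_zero_iff]
      intro h
      have := Nat.le_of_dvd (by norm_num) h
      omega
    exact_mod_cast this
  -- Part A : multiples of t
  have hsetA : (Finset.range (p - 1)).filter (fun j => t ∣ j)
      = (Finset.range 5).image (· * t) := by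
    ext j
    simp only [mem_filter, mem_range, mem_image]
    constructor
    · rintro ⟨hj, i, rfl⟩
      refine ⟨i, ?_, mul_comm i t⟩
      by_contra h
      push_neg at h
      have : 5 * t ≤ t * i := by
        calc 5 * t = t * 5 := by ring
        _ ≤ t * i := Nat.mul_le_mul_left t h
      omega
    · rintro ⟨i, hi, rfl⟩
      exact ⟨by nlinarith, ⟨i, mul_comm i t⟩⟩
  have partA : ∑ j ∈ (Finset.range (p - 1)).filter (fun j => t ∣ j),
      gaussSum (T ^ j) θ ^ 5 / gaussSum (T ^ (5 * j)) θ * (T ^ (5 * j)) (5 : ZMod p)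
      = 1 - ∑ i ∈ Finset.Icc 1 4, gaussSum (T ^ (i * t)) θ ^ 5 := by
    rw [hsetA, Finset.sum_image (fun i _ j _ h => Nat.eq_of_mul_eq_mul_right ht1 h)]
    have hterm : ∀ i ∈ Finset.range 5,
        gaussSum (T ^ (i * t)) θ ^ 5 / gaussSum (T ^ (5 * (i * t))) θ
          * (T ^ (5 * (i * t))) (5 : ZMod p)
        = - gaussSum (T ^ (i * t)) θ ^ 5 := by
      intro i _
      have h1 : T ^ (5 * (i * t)) = 1 := by
        refine (hpow1 _).mpr ⟨i, by rw [← h5t]; ring⟩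
      rw [h1, hg1, MulChar.one_apply h5u, mul_one, div_neg, div_one]
    rw [Finset.sum_congr rfl hterm]
    have hr5 : Finset.range 5 = insert 0 (Finset.Icc 1 4) := by decide
    rw [hr5, Finset.sum_insert (by decide)]
    rw [zero_mul, pow_zero, hg1]
    rw [Finset.sum_neg_distrib]
    ring
  -- Part B : non-multiples of t
  have hsetB : (Finset.Icc 1 (p - 2)).filter (fun j => ¬ t ∣ j)
      = (Finset.range (p - 1)).filter (fun j => ¬ t ∣ j) := by
    ext j
    simp only [mem_filter, mem_range, mem_Icc]
    constructor
    · rintro ⟨⟨h1, h2⟩, h3⟩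
      exact ⟨by omega, h3⟩
    · rintro ⟨h1, h2⟩
      have hj0 : j ≠ 0 := fun h => h2 (h ▸ dvd_zero t)
      exact ⟨⟨by omega, by omega⟩, h2⟩
  have partB : ∑ j ∈ (Finset.range (p - 1)).filter (fun j => ¬ t ∣ j),
      gaussSum (T ^ j) θ ^ 5 / gaussSum (T ^ (5 * j)) θ * (T ^ (5 * j)) (5 : ZMod p)
      = (1 / (p : ℂ)) *
          ∑ j ∈ (Finset.Icc 1 (p - 2)).filter (fun j => ¬ t ∣ j),
            gaussSum (T ^ j) θ ^ 5 * gaussSum (T ^ (-(5 * (j : ℤ)))) θ *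
              (T ^ (5 * j)) (-5 : ZMod p) := by
    rw [hsetB, Finset.mul_sum]
    refine Finset.sum_congr rfl fun j hj => ?_
    simp only [mem_filter, mem_range] at hj
    obtain ⟨hjlt, hjnd⟩ := hj
    set χ : MulChar (ZMod p) ℂ := T ^ (5 * j) with hχdef
    have hχ : χ ≠ 1 := by
      intro h
      apply hjnd
      have h51 : (p - 1) ∣ 5 * j := (hpow1 _).mp h
      rw [← h5t] at h51
      exact (mul_dvd_mul_iff_left (by norm_num : (5:ℕ) ≠ 0)).mp h51
    have hzpow : T ^ (-(5 * (j : ℤ))) = χ⁻¹ := by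
      have hcast : (-(5 * (j : ℤ))) = -((5 * j : ℕ) : ℤ) := by push_cast; ring
      rw [hcast, zpow_neg, zpow_natCast]
    have hm1 : χ (-1) * χ (-1) = 1 := by
      rw [← map_mul, neg_mul_neg, one_mul]
      exact χ.map_one
    have hinv : gaussSum χ θ * (gaussSum χ⁻¹ θ * χ (-1)) = (p : ℂ) := by
      have h1 := gaussSum_mul_gaussSum_eq_card hχ hθprim
      have h2 := mul_gaussSum_inv_eq_gaussSum χ⁻¹ θ
      have h3 : χ⁻¹ (-1) = χ (-1) := by
        rw [MulChar.inv_apply_eq_inv']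
        exact inv_eq_of_mul_eq_one_right hm1
      rw [h3] at h2
      calc gaussSum χ θ * (gaussSum χ⁻¹ θ * χ (-1))
          = (gaussSum χ θ * gaussSum χ⁻¹ θ⁻¹) * (χ (-1) * χ (-1)) := by
            rw [← h2]; ring
        _ = (p : ℂ) := by rw [h1, hm1, mul_one, ZMod.card]
    have hgne : gaussSum χ θ ≠ 0 := by
      refine gaussSum_ne_zero_of_nontrivial ?_ hχ hθprim
      rw [ZMod.card]; exact hpne
    have hm5 : χ (-5 : ZMod p) = χ (-1) * χ (5 : ZMod p) := by
      rw [← map_mul]; norm_num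
    rw [hzpow, hm5]
    set A : ℂ := gaussSum (T ^ j) θ with hA
    set B : ℂ := gaussSum χ θ with hB
    set C : ℂ := gaussSum χ⁻¹ θ with hC
    rw [div_mul_eq_mul_div, div_eq_iff hgne]
    field_simp
    linear_combination (-(A ^ 5 * χ (5 : ZMod p))) * hinv
  rw [← Finset.sum_filter_add_sum_filter_not (Finset.range (p - 1)) (fun j => t ∣ j), partA, partB]
end

section
/- Let p ≠ 5 be a prime with p ≢ 1 (mod 5), let θ be a nontrivial additive character of F_p with values in ℂ, and let T be a generator of the group of multiplicative characters of F_p. Then, as complex numbers, Σ_{y∈F_p, y≠0} Σ θ(y·(x_1^5 + x_2^5 + x_3^5 + x_4^5 + x_5^5 − 5·x_1x_2x_3x_4x_5)) = Σ_{e=0}^{p−2} g(T^{−e})^5·g(T^{5e})·T^{−5e}(−5), where the inner sum on the left runs over all tuples (x_1, x_2, x_3, x_4, x_5) with every x_i ∈ F_p nonzero. -/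
/-!
Expand the cross term `θ(-5 y x₁⋯x₅)` in multiplicative characters,
`(p - 1) θ(a) = Σ_χ g(χ) χ⁻¹(a)` for `a ≠ 0`, and reindex by `χ = ψ⁵`, which is legitimate
because fifth powering is a bijection of the (cyclic, order `p - 1`) character group when
`5 ∤ p - 1`. Each sum over `xᵢ` then becomes, after the substitution `u = xᵢ⁵` (again a
bijection), the twisted Gauss sum `Σ_u θ(y u) ψ⁻¹(u) = ψ(y) g(ψ⁻¹)`. The factor `ψ⁵(y)` produced
by the five of them cancels the `(ψ⁵)⁻¹(y)` coming from the expansion, so the sum over `y` only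
contributes a factor `p - 1`.
-/

open Finset

theorem Units.sum_univ_eq_sum_filter_isUnit {M β : Type*} [Monoid M] [Fintype M] [Fintype Mˣ]
    [DecidablePred (IsUnit : M → Prop)] [AddCommMonoid β] (f : M → β) :
    ∑ u : Mˣ, f u = ∑ a ∈ univ.filter IsUnit, f a := by
  refine sum_bij (fun u _ => (u : M)) (by simp) (fun _ _ _ _ => Units.ext) ?_ (by simp)
  intro a ha
  exact ⟨(mem_filter.1 ha).2.unit, mem_univ _, rfl⟩

theorem AddChar.map_sum_eq_prod {ι A M : Type*} [AddCommMonoid A] [CommMonoid M]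
    (ψ : AddChar A M) (s : Finset ι) (f : ι → A) :
    ψ (∑ i ∈ s, f i) = ∏ i ∈ s, ψ (f i) :=
  map_prod ψ.toMonoidHom (fun i => Multiplicative.ofAdd (f i)) s

theorem MulChar.sum_units_mul_eq_sum {M R : Type*} [CommMonoid M] [Fintype M] [Fintype Mˣ]
    [CommSemiring R] (χ : MulChar M R) (f : M → R) :
    ∑ u : Mˣ, χ u * f u = ∑ a, χ a * f a := by
  classical
  rw [Units.sum_univ_eq_sum_filter_isUnit (fun a => χ a * f a), sum_filter_of_ne]
  intro a _ ha
  by_contra hu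
  exact ha (by rw [χ.map_nonunit hu, zero_mul])

theorem sum_range_natCard_pow_of_forall_mem_zpowers {G β : Type*} [Group G] [Fintype G]
    [AddCommMonoid β] {g : G} (hg : ∀ x, x ∈ Subgroup.zpowers g) (f : G → β) :
    ∑ i ∈ range (Nat.card G), f (g ^ i) = ∑ x, f x := by
  classical
  rw [← IsCyclic.image_range_card hg, sum_image]
  rw [← orderOf_eq_card_of_forall_mem_zpowers hg]
  exact fun i hi j hj => pow_injOn_Iio_orderOf (by simpa using hi) (by simpa using hj)

section

variable {M R : Type*} [CommRing M] [Fintype M] [DecidableEq M] [CommRing R]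

theorem sum_units_mulChar_mul_addChar_mul (χ : MulChar M R) (ψ : AddChar M R) (y : Mˣ) :
    ∑ u : Mˣ, χ u * ψ (y * u) = χ⁻¹ y * gaussSum χ ψ := by
  rw [← gaussSum_mulShift_eq, gaussSum, ← MulChar.sum_units_mul_eq_sum]
  rfl

theorem sum_addChar_mul_sum_pow_mul_mulChar_prod {n : ℕ} (hn : (Nat.card Mˣ).Coprime n)
    (χ : MulChar M R) (ψ : AddChar M R) (y : Mˣ) :
    ∑ x : Fin n → Mˣ, ψ (y * ∑ i, (x i : M) ^ n) * (χ ^ n)⁻¹ (∏ i, (x i : M)) =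
      (χ ^ n) y * gaussSum χ⁻¹ ψ ^ n := by
  have hterm (x : Fin n → Mˣ) : ψ (y * ∑ i, (x i : M) ^ n) * (χ ^ n)⁻¹ (∏ i, (x i : M)) =
      ∏ i, χ⁻¹ ↑(x i ^ n) * ψ (y * ↑(x i ^ n)) := by
    rw [mul_comm, mul_sum, AddChar.map_sum_eq_prod, ← inv_pow, map_prod, ← prod_mul_distrib]
    refine prod_congr rfl fun i _ => ?_
    rw [MulChar.pow_apply_coe, Units.val_pow_eq_pow_val, map_pow]
  have hsum : ∑ u : Mˣ, χ⁻¹ ↑(u ^ n) * ψ (y * ↑(u ^ n)) = χ y * gaussSum χ⁻¹ ψ := by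
    have h := sum_units_mulChar_mul_addChar_mul χ⁻¹ ψ y
    rw [inv_inv] at h
    rw [← h]
    exact (powCoprime hn).sum_comp fun u => χ⁻¹ u * ψ (y * u)
  simp_rw [hterm]
  rw [← Fintype.prod_sum fun (_ : Fin n) (u : Mˣ) => χ⁻¹ ↑(u ^ n) * ψ (y * ↑(u ^ n)),
    prod_const, card_univ, Fintype.card_fin, hsum, mul_pow, MulChar.pow_apply_coe]

end

section

variable {N : ℕ} [NeZero N] {R : Type*} [CommRing R] [IsDomain R]
  [HasEnoughRootsOfUnity R (Monoid.exponent (ZMod N)ˣ)]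

theorem sum_gaussSum_mul_inv_apply (ψ : AddChar (ZMod N) R) (a : (ZMod N)ˣ) :
    ∑ χ : MulChar (ZMod N) R, gaussSum χ ψ * χ⁻¹ a = N.totient * ψ a := by
  calc ∑ χ : MulChar (ZMod N) R, gaussSum χ ψ * χ⁻¹ a
      = ∑ x, ψ x * ∑ χ : MulChar (ZMod N) R, χ (a : ZMod N)⁻¹ * χ x := by
        simp only [gaussSum, sum_mul, mul_sum, MulChar.inv_apply, Ring.inverse_unit,
          ZMod.inv_coe_unit]
        rw [sum_comm]
        exact sum_congr rfl fun x _ => sum_congr rfl fun χ _ => by ring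
    _ = N.totient * ψ a := by
        simp only [DirichletCharacter.sum_char_inv_mul_char_eq R a.isUnit, mul_ite, mul_zero,
          sum_ite_eq, mem_univ, if_true]
        ring

theorem sum_gaussSum_pow_mul_inv_pow_apply {n : ℕ} (hn : (Nat.card (ZMod N)ˣ).Coprime n)
    (ψ : AddChar (ZMod N) R) (a : (ZMod N)ˣ) :
    ∑ χ : MulChar (ZMod N) R, gaussSum (χ ^ n) ψ * (χ ^ n)⁻¹ a = N.totient * ψ a := by
  rw [← MulChar.card_eq_card_units_of_hasEnoughRootsOfUnity (ZMod N) R] at hn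
  rw [← sum_gaussSum_mul_inv_apply]
  exact (powCoprime hn).sum_comp fun χ => gaussSum χ ψ * χ⁻¹ a

theorem totient_mul_sum_addChar_sum_pow_add_mul_prod {n : ℕ}
    (hn : (Nat.card (ZMod N)ˣ).Coprime n) (ψ : AddChar (ZMod N) R) (c y : (ZMod N)ˣ) :
    N.totient * ∑ x : Fin n → (ZMod N)ˣ,
        ψ (y * (∑ i, (x i : ZMod N) ^ n + c * ∏ i, (x i : ZMod N))) =
      ∑ χ : MulChar (ZMod N) R, gaussSum χ⁻¹ ψ ^ n * gaussSum (χ ^ n) ψ * (χ ^ n)⁻¹ c := by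
  calc _ = ∑ x : Fin n → (ZMod N)ˣ, ψ (y * ∑ i, (x i : ZMod N) ^ n) *
          (N.totient * ψ ↑(y * c * ∏ i, x i)) := by
        rw [mul_sum]
        refine sum_congr rfl fun x _ => ?_
        rw [mul_add, AddChar.map_add_eq_mul, Units.val_mul, Units.val_mul, Units.coe_prod,
          mul_assoc (y : ZMod N)]
        ring
    _ = ∑ x : Fin n → (ZMod N)ˣ, ψ (y * ∑ i, (x i : ZMod N) ^ n) *
          ∑ χ : MulChar (ZMod N) R, gaussSum (χ ^ n) ψ * (χ ^ n)⁻¹ ↑(y * c * ∏ i, x i) := by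
        simp_rw [sum_gaussSum_pow_mul_inv_pow_apply hn]
    _ = ∑ χ : MulChar (ZMod N) R, gaussSum (χ ^ n) ψ * (χ ^ n)⁻¹ ↑(y * c) *
          ∑ x : Fin n → (ZMod N)ˣ,
            ψ (y * ∑ i, (x i : ZMod N) ^ n) * (χ ^ n)⁻¹ (∏ i, (x i : ZMod N)) := by
        simp_rw [mul_sum]
        rw [sum_comm]
        refine sum_congr rfl fun χ _ => sum_congr rfl fun x _ => ?_
        rw [Units.val_mul, Units.coe_prod, map_mul]
        ring
    _ = ∑ χ : MulChar (ZMod N) R, gaussSum (χ ^ n) ψ * (χ ^ n)⁻¹ ↑(y * c) *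
          ((χ ^ n) y * gaussSum χ⁻¹ ψ ^ n) := by
        simp_rw [sum_addChar_mul_sum_pow_mul_mulChar_prod hn]
    _ = _ := by
        refine sum_congr rfl fun χ _ => ?_
        have hy : (χ ^ n)⁻¹ (y : ZMod N) * (χ ^ n) y = 1 := by
          rw [← MulChar.mul_apply, MulChar.inv_mul, MulChar.one_apply_coe]
        rw [Units.val_mul, map_mul]
        linear_combination (gaussSum (χ ^ n) ψ * (χ ^ n)⁻¹ c * gaussSum χ⁻¹ ψ ^ n) * hy

theorem sum_units_sum_addChar_sum_pow_add_mul_prod [CharZero R] {n : ℕ}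
    (hn : (Nat.card (ZMod N)ˣ).Coprime n) (ψ : AddChar (ZMod N) R) (c : (ZMod N)ˣ) :
    ∑ y : (ZMod N)ˣ, ∑ x : Fin n → (ZMod N)ˣ,
        ψ (y * (∑ i, (x i : ZMod N) ^ n + c * ∏ i, (x i : ZMod N))) =
      ∑ χ : MulChar (ZMod N) R, gaussSum χ⁻¹ ψ ^ n * gaussSum (χ ^ n) ψ * (χ ^ n)⁻¹ c := by
  have htotient : (N.totient : R) ≠ 0 :=
    Nat.cast_ne_zero.2 (Nat.totient_pos.2 (NeZero.pos N)).ne'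
  apply mul_left_cancel₀ htotient
  rw [mul_sum, sum_congr rfl fun y _ => totient_mul_sum_addChar_sum_pow_add_mul_prod hn ψ c y,
    sum_const, card_univ, ZMod.card_units_eq_totient, nsmul_eq_mul]

end

theorem sum_theta_quintic_eq_gaussSums_general (p : ℕ) [Fact p.Prime] (hp5 : p ≠ 5) (hp : p % 5 ≠ 1)
    (θ : AddChar (ZMod p) ℂ)
    (T : MulChar (ZMod p) ℂ) (hT : ∀ χ : MulChar (ZMod p) ℂ, ∃ k : ℕ, χ = T ^ k) :
    ∑ y ∈ Finset.univ.filter (fun y : ZMod p => y ≠ 0),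
        ∑ x : Fin 5 → (ZMod p)ˣ,
          θ (y * (∑ i, ((x i : ZMod p)) ^ 5 - 5 * ∏ i, (x i : ZMod p))) =
      ∑ e ∈ Finset.range (p - 1),
        gaussSum (T ^ (-(e : ℤ))) θ ^ 5 * gaussSum (T ^ (5 * e)) θ *
          (T ^ (-(5 * (e : ℤ)))) (-5 : ZMod p) := by
  have : NeZero (Monoid.exponent (ZMod p)ˣ) := ⟨Monoid.exponent_ne_zero_of_finite⟩
  have hcard : Nat.card (ZMod p)ˣ = p - 1 := by rw [Nat.card_eq_fintype_card, ZMod.card_units]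
  have hcoprime : (Nat.card (ZMod p)ˣ).Coprime 5 := by
    rw [hcard, Nat.coprime_comm, Nat.Prime.coprime_iff_not_dvd (by norm_num)]
    have := (Fact.out : p.Prime).two_le
    omega
  have h5 : (-5 : ZMod p) ≠ 0 := by
    rw [neg_ne_zero, ← Nat.cast_ofNat, Ne, ZMod.natCast_eq_zero_iff,
      Nat.prime_dvd_prime_iff_eq Fact.out (by norm_num)]
    exact hp5
  have hgen (χ : MulChar (ZMod p) ℂ) : χ ∈ Subgroup.zpowers T := by
    obtain ⟨k, rfl⟩ := hT χ
    exact Subgroup.npow_mem_zpowers T k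
  have hsummand (e : ℕ) : gaussSum (T ^ (-(e : ℤ))) θ ^ 5 * gaussSum (T ^ (5 * e)) θ *
      (T ^ (-(5 * (e : ℤ)))) (-5 : ZMod p) = gaussSum (T ^ e)⁻¹ θ ^ 5 * gaussSum ((T ^ e) ^ 5) θ *
      ((T ^ e) ^ 5)⁻¹ ↑(Units.mk0 _ h5) := by
    rw [show 5 * (e : ℤ) = (5 * e : ℕ) by push_cast; rfl, zpow_neg, zpow_neg, zpow_natCast,
      zpow_natCast, pow_mul']
    rfl
  simp_rw [← isUnit_iff_ne_zero]
  rw [← Units.sum_univ_eq_sum_filter_isUnit]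
  simp_rw [hsummand]
  rw [← hcard, ← MulChar.card_eq_card_units_of_hasEnoughRootsOfUnity (ZMod p) ℂ,
    sum_range_natCard_pow_of_forall_mem_zpowers hgen
      fun χ => gaussSum χ⁻¹ θ ^ 5 * gaussSum (χ ^ 5) θ * (χ ^ 5)⁻¹ ↑(Units.mk0 _ h5),
    ← sum_units_sum_addChar_sum_pow_add_mul_prod hcoprime]
  simp only [Units.val_mk0, neg_mul, ← sub_eq_add_neg]

/-- For a prime `p ≠ 5` with `p ≢ 1 (mod 5)`, a nontrivial additive character `θ` and a
generator `T` of the character group,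
`Σ_{y ≠ 0} Σ_{xᵢ ∈ F_p*} θ(y(x₁⁵+⋯+x₅⁵ − 5x₁x₂x₃x₄x₅))
  = Σ_{e=0}^{p-2} g(T^{-e})⁵ g(T^{5e}) T^{-5e}(-5)`. -/
theorem sum_theta_quintic_eq_gaussSums (p : ℕ) [Fact p.Prime] (hp5 : p ≠ 5) (hp : p % 5 ≠ 1)
    (θ : AddChar (ZMod p) ℂ) (hθ : θ ≠ 1)
    (T : MulChar (ZMod p) ℂ) (hT : ∀ χ : MulChar (ZMod p) ℂ, ∃ k : ℕ, χ = T ^ k) :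
    ∑ y ∈ Finset.univ.filter (fun y : ZMod p => y ≠ 0),
        ∑ x : Fin 5 → (ZMod p)ˣ,
          θ (y * (∑ i, ((x i : ZMod p)) ^ 5 - 5 * ∏ i, (x i : ZMod p))) =
      ∑ e ∈ Finset.range (p - 1),
        gaussSum (T ^ (-(e : ℤ))) θ ^ 5 * gaussSum (T ^ (5 * e)) θ *
          (T ^ (-(5 * (e : ℤ)))) (-5 : ZMod p) :=
  sum_theta_quintic_eq_gaussSums_general p hp5 hp θ T hT
end
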